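/- Let 𝒞 ⊂ ℝ^m be countable, let p_S be a probability mass function on 𝒞, let σ > 0, and let φ be the density of N(0, σ²I_m). Define the posterior p(c|x) = p_S(c)φ(x−c)/Σ_u p_S(u)φ(x−u) and the kernel K(c, c*) = ∫_{ℝ^m} p(c|x) φ(x−c*) dx. Then for all distinct c, c* ∈ 𝒞 with p_S(c*) > 0, K(c, c*) ≤ (1/2) √(p_S(c)/p_S(c*)) · exp( −‖c−c*‖²/(8σ²) ). -/

import Mathlib

/-!
Write `w_u(x) = p_S(u) φ(x - c_u)`. The posterior weight of `c` is at most
`w_c / (w_c + w_{c*}) ≤ ½ √(w_c / w_{c*})` by AM-GM, so the integrand of `K(c, c*)` is at most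
`½ √(p_S(c)/p_S(c*)) √(φ(x - c)) √(φ(x - c*))`. By Apollonius' theorem the geometric mean of the two
Gaussian densities is `exp(-‖c - c*‖²/(8σ²))` times the Gaussian density centred at the midpoint,
which integrates to `1`.
-/

open MeasureTheory

/-- The density of the Gaussian distribution `N(0, σ² I_m)` on `ℝ^m`
(with `t = σ²` the variance). -/
noncomputable def gaussDensity (m : ℕ) (t : ℝ) (u : EuclideanSpace ℝ (Fin m)) : ℝ :=
  (2 * Real.pi * t) ^ (-(m : ℝ) / 2) * Real.exp (-‖u‖ ^ 2 / (2 * t))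

section GaussDensity

variable {m : ℕ} {t : ℝ}

lemma gaussDensity_pos (ht : 0 < t) (u : EuclideanSpace ℝ (Fin m)) : 0 < gaussDensity m t u := by
  unfold gaussDensity
  positivity

lemma gaussDensity_le (ht : 0 < t) (u : EuclideanSpace ℝ (Fin m)) :
    gaussDensity m t u ≤ (2 * Real.pi * t) ^ (-(m : ℝ) / 2) := by
  unfold gaussDensity
  refine mul_le_of_le_one_right (by positivity) (Real.exp_le_one_iff.mpr ?_)
  exact div_nonpos_of_nonpos_of_nonneg (by simp) (by positivity)

lemma integral_gaussDensity (ht : 0 < t) :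
    ∫ u : EuclideanSpace ℝ (Fin m), gaussDensity m t u = 1 := by
  have hexp (u : EuclideanSpace ℝ (Fin m)) :
      Real.exp (-‖u‖ ^ 2 / (2 * t)) = Real.exp (-(2 * t)⁻¹ * ‖u‖ ^ 2) := by
    ring_nf
  simp only [gaussDensity, hexp]
  rw [integral_const_mul, GaussianFourier.integral_rexp_neg_mul_sq_norm (by positivity),
    finrank_euclideanSpace_fin, div_inv_eq_mul, show Real.pi * (2 * t) = 2 * Real.pi * t by ring,
    ← Real.rpow_add (by positivity), neg_div, neg_add_cancel, Real.rpow_zero]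

lemma integrable_gaussDensity (ht : 0 < t) : Integrable (gaussDensity m t) :=
  Integrable.of_integral_ne_zero (by simp [integral_gaussDensity ht])

lemma sqrt_gaussDensity (ht : 0 < t) (u : EuclideanSpace ℝ (Fin m)) :
    √(gaussDensity m t u) =
      √((2 * Real.pi * t) ^ (-(m : ℝ) / 2)) * Real.exp (-‖u‖ ^ 2 / (4 * t)) := by
  rw [gaussDensity, Real.sqrt_mul (by positivity), ← Real.exp_half]
  ring_nf

lemma sqrt_gaussDensity_mul_sqrt_gaussDensity (ht : 0 < t) (a b x : EuclideanSpace ℝ (Fin m)) :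
    √(gaussDensity m t (x - a)) * √(gaussDensity m t (x - b)) =
      Real.exp (-‖a - b‖ ^ 2 / (8 * t)) * gaussDensity m t (x - midpoint ℝ a b) := by
  have apollonius :=
    EuclideanGeometry.dist_sq_add_dist_sq_eq_two_mul_dist_midpoint_sq_add_half_dist_sq x a b
  simp only [dist_eq_norm] at apollonius
  rw [sqrt_gaussDensity ht, sqrt_gaussDensity ht, gaussDensity,
    mul_mul_mul_comm, Real.mul_self_sqrt (by positivity), ← Real.exp_add, mul_left_comm,
    ← Real.exp_add]
  congr 2
  linear_combination (-1 / (4 * t)) * apollonius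

end GaussDensity

lemma div_add_le_half_sqrt_div {a b : ℝ} (ha : 0 ≤ a) (hb : 0 < b) :
    a / (a + b) ≤ 1 / 2 * √(a / b) := by
  set s := √(a / b)
  have hs : 0 ≤ s := Real.sqrt_nonneg _
  have ha_eq : a = s ^ 2 * b := by
    rw [Real.sq_sqrt (by positivity), div_mul_cancel₀ a hb.ne']
  rw [ha_eq, div_le_iff₀ (by positivity)]
  nlinarith [mul_nonneg hs (sq_nonneg (s - 1)), hb]

lemma div_tsum_le_half_sqrt_div {ι : Type*} {w : ι → ℝ} (hw0 : ∀ u, 0 ≤ w u) (hw : Summable w)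
    {i j : ι} (hij : i ≠ j) (hj : 0 < w j) :
    w i / ∑' u, w u ≤ 1 / 2 * √(w i / w j) := by
  have htwo : w i + w j ≤ ∑' u, w u := by
    classical
    simpa [Finset.sum_pair hij] using hw.sum_le_tsum {i, j} (fun u _ => hw0 u)
  calc w i / ∑' u, w u ≤ w i / (w i + w j) :=
        div_le_div_of_nonneg_left (hw0 i) (by linarith [hw0 i]) htwo
    _ ≤ 1 / 2 * √(w i / w j) := div_add_le_half_sqrt_div (hw0 i) hj

section Posterior

variable {m : ℕ} {t : ℝ} {ι : Type*} {p : ι → ℝ} (c : ι → EuclideanSpace ℝ (Fin m))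

lemma summable_mul_gaussDensity (ht : 0 < t) (hp0 : ∀ u, 0 ≤ p u) (hp : Summable p)
    (x : EuclideanSpace ℝ (Fin m)) : Summable fun u => p u * gaussDensity m t (x - c u) :=
  (hp.mul_right _).of_nonneg_of_le (fun u => mul_nonneg (hp0 u) (gaussDensity_pos ht _).le)
    (fun u => mul_le_mul_of_nonneg_left (gaussDensity_le ht _) (hp0 u))

lemma posterior_mul_gaussDensity_le (ht : 0 < t) (hp0 : ∀ u, 0 ≤ p u) (hp : Summable p)
    {i j : ι} (hij : i ≠ j) (hj : 0 < p j) (x : EuclideanSpace ℝ (Fin m)) :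
    p i * gaussDensity m t (x - c i) / (∑' u, p u * gaussDensity m t (x - c u))
        * gaussDensity m t (x - c j) ≤
      1 / 2 * √(p i / p j) * Real.exp (-‖c i - c j‖ ^ 2 / (8 * t))
        * gaussDensity m t (x - midpoint ℝ (c i) (c j)) := by
  have hφi := gaussDensity_pos ht (x - c i)
  have hφj := gaussDensity_pos ht (x - c j)
  have hweight := div_tsum_le_half_sqrt_div
    (fun u => mul_nonneg (hp0 u) (gaussDensity_pos ht _).le)
    (summable_mul_gaussDensity c ht hp0 hp x) hij (mul_pos hj hφj)
  calc _ ≤ 1 / 2 * √(p i * gaussDensity m t (x - c i) / (p j * gaussDensity m t (x - c j)))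
          * gaussDensity m t (x - c j) := mul_le_mul_of_nonneg_right hweight hφj.le
    _ = 1 / 2 * √(p i / p j) *
          (√(gaussDensity m t (x - c i)) * √(gaussDensity m t (x - c j))) := by
      rw [mul_div_mul_comm, Real.sqrt_mul (div_nonneg (hp0 i) hj.le), Real.sqrt_div' _ hφj.le]
      field_simp
      rw [Real.sq_sqrt hφj.le]
    _ = _ := by rw [sqrt_gaussDensity_mul_sqrt_gaussDensity ht]; ring

end Posterior

theorem stmt13_general (m : ℕ) {ι : Type*}
    (c : ι → EuclideanSpace ℝ (Fin m))
    (pS : ι → ℝ) (hpS0 : ∀ i, 0 ≤ pS i) (hpS1 : ∑' i, pS i = 1)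
    (σ : ℝ) (hσ : 0 < σ)
    (post : ι → EuclideanSpace ℝ (Fin m) → ℝ)
    (hpost : post = fun i x => pS i * gaussDensity m (σ ^ 2) (x - c i)
        / ∑' u, pS u * gaussDensity m (σ ^ 2) (x - c u))
    (K : ι → ι → ℝ)
    (hK : K = fun i istar =>
        ∫ x : EuclideanSpace ℝ (Fin m), post i x * gaussDensity m (σ ^ 2) (x - c istar)) :
    ∀ i istar : ι, i ≠ istar → 0 < pS istar →
      K i istar ≤ (1 / 2) * Real.sqrt (pS i / pS istar)
        * Real.exp (-‖c i - c istar‖ ^ 2 / (8 * σ ^ 2)) := by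
  intro i istar hne hstar
  subst hpost hK
  have ht : 0 < σ ^ 2 := by positivity
  have hsum : Summable pS := by
    by_contra h
    simp [tsum_eq_zero_of_not_summable h] at hpS1
  set φ := gaussDensity m (σ ^ 2)
  calc ∫ x, pS i * φ (x - c i) / (∑' u, pS u * φ (x - c u)) * φ (x - c istar)
      ≤ ∫ x, 1 / 2 * √(pS i / pS istar) * Real.exp (-‖c i - c istar‖ ^ 2 / (8 * σ ^ 2))
          * φ (x - midpoint ℝ (c i) (c istar)) := by
        refine integral_mono_of_nonneg (.of_forall fun x => ?_)
          (((integrable_gaussDensity ht).comp_sub_right _).const_mul _)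
          (.of_forall (posterior_mul_gaussDensity_le c ht hpS0 hsum hne hstar))
        have hφ (u) : 0 ≤ φ u := (gaussDensity_pos ht u).le
        exact mul_nonneg (div_nonneg (mul_nonneg (hpS0 i) (hφ _))
          (tsum_nonneg fun u => mul_nonneg (hpS0 u) (hφ _))) (hφ _)
    _ = _ := by
      rw [integral_const_mul, integral_sub_right_eq_self, integral_gaussDensity ht, mul_one]

/-- pointwise kernel bound: for a countable codebook `{c i} ⊂ ℝ^m`
with pmf `p_S`, posterior `p(c|x)` of the Gaussian channel with noise `N(0, σ² I_m)`
and resampling kernel `K(c, c*) = ∫ p(c|x) φ(x−c*) dx`, for all distinct `c, c*`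
with `p_S(c*) > 0`,
`K(c, c*) ≤ (1/2) √(p_S(c)/p_S(c*)) exp(−‖c−c*‖²/(8σ²))`. -/
theorem stmt13 (m : ℕ) {ι : Type*} [Countable ι]
    (c : ι → EuclideanSpace ℝ (Fin m)) (hc : Function.Injective c)
    (pS : ι → ℝ) (hpS0 : ∀ i, 0 ≤ pS i) (hpS1 : ∑' i, pS i = 1)
    (σ : ℝ) (hσ : 0 < σ)
    (post : ι → EuclideanSpace ℝ (Fin m) → ℝ)
    (hpost : post = fun i x => pS i * gaussDensity m (σ ^ 2) (x - c i)
        / ∑' u, pS u * gaussDensity m (σ ^ 2) (x - c u))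
    (K : ι → ι → ℝ)
    (hK : K = fun i istar =>
        ∫ x : EuclideanSpace ℝ (Fin m), post i x * gaussDensity m (σ ^ 2) (x - c istar)) :
    ∀ i istar : ι, i ≠ istar → 0 < pS istar →
      K i istar ≤ (1 / 2) * Real.sqrt (pS i / pS istar)
        * Real.exp (-‖c i - c istar‖ ^ 2 / (8 * σ ^ 2)) :=
  stmt13_general m c pS hpS0 hpS1 σ hσ post hpost K hK
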